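/- Let π be a probability measure on a measurable space Ω and let F : [0,1] × Ω → ℝ be bounded measurable with sup_ω |F(r, ω) − F(t, ω)| ≤ L_ab |r − t| for all r, t ∈ [0,1]. Fix t ∈ [0,1] and δ ∈ (0, 1] with t + δ ≤ 1. Let P be the Gibbs tilt of π by G(ω) := ∫_t^{t+δ} F(r, ω) dr and let Q be the Gibbs tilt of π by Ḡ(ω) := δ F(t, ω). Then ‖P − Q‖_TV ≤ C₁ δ², where C₁ := (1/2) L_ab e^{L_ab}. -/

import Mathlib

/-!
Since `F` is `Lab`-Lipschitz in time, the exact exponent `G = ∫ₜ^{t+δ} F_r dr` and the frozen one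
`Ḡ = δ F_t` differ uniformly by at most `ε = Lab δ² / 2`. Then the normalizers differ by a factor
at most `e^ε`, so the two Gibbs densities `p`, `q` are within a factor `e^{2ε}` of each other,
whence `|p - q| ≤ (e^{2ε} - 1) q`. Integrating against `π` gives a total variation of at most
`(e^{2ε} - 1) / 2 ≤ ε e^{2ε} ≤ ε e^{Lab}`.
-/

open MeasureTheory

section

open Real

lemma abs_sub_le_sub_one_mul {p q c : ℝ} (hc : 1 ≤ c) (hpq : p ≤ c * q)
    (hqp : q ≤ c * p) : |p - q| ≤ (c - 1) * q := by
  rw [abs_le]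
  constructor <;> nlinarith

lemma exp_sub_one_le_mul_exp (x : ℝ) : exp x - 1 ≤ x * exp x := by
  have h := mul_le_mul_of_nonneg_right (add_one_le_exp (-x)) (exp_pos x).le
  rw [← exp_add, neg_add_cancel, exp_zero] at h
  linarith

lemma exp_mul_sq_sub_one_le {L δ : ℝ} (hL : 0 ≤ L) (hδ0 : 0 ≤ δ) (hδ1 : δ ≤ 1) :
    exp (L * δ ^ 2) - 1 ≤ L * exp L * δ ^ 2 :=
  calc exp (L * δ ^ 2) - 1 ≤ L * δ ^ 2 * exp (L * δ ^ 2) := exp_sub_one_le_mul_exp _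
    _ ≤ L * δ ^ 2 * exp L := by
        gcongr
        exact mul_le_of_le_one_right hL (pow_le_one₀ hδ0 hδ1)
    _ = L * exp L * δ ^ 2 := by ring

lemma abs_intervalIntegral_sub_mul_le {f : ℝ → ℝ} {a b L : ℝ} (hab : a ≤ b)
    (hf : IntervalIntegrable f volume a b) (hL : ∀ r ∈ Set.Ioc a b, |f r - f a| ≤ L * (r - a)) :
    |(∫ r in a..b, f r) - (b - a) * f a| ≤ L * (b - a) ^ 2 / 2 := by
  have hconst : (b - a) * f a = ∫ _ in a..b, f a := by simp
  have hlin : (∫ r in a..b, L * (r - a)) = L * (b - a) ^ 2 / 2 := by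
    rw [intervalIntegral.integral_const_mul,
      intervalIntegral.integral_comp_sub_right (fun x => x), integral_id]
    ring
  calc |(∫ r in a..b, f r) - (b - a) * f a|
      = ‖∫ r in a..b, f r - f a‖ := by
        rw [hconst, intervalIntegral.integral_sub hf intervalIntegrable_const, Real.norm_eq_abs]
    _ ≤ ∫ r in a..b, L * (r - a) :=
        intervalIntegral.norm_integral_le_of_norm_le hab (ae_of_all _ hL)
          ((continuous_const.mul (continuous_id.sub continuous_const)).intervalIntegrable _ _)
    _ = L * (b - a) ^ 2 / 2 := hlin

lemma measurable_intervalIntegral_of_uncurry {Ω : Type*} [MeasurableSpace Ω] {F : ℝ → Ω → ℝ}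
    (hF : Measurable (Function.uncurry F)) (a b : ℝ) :
    Measurable fun ω => ∫ r in a..b, F r ω := by
  have hsm : StronglyMeasurable fun p : Ω × ℝ => F p.2 p.1 :=
    (hF.comp measurable_swap).stronglyMeasurable
  exact (hsm.integral_prod_right' (ν := volume.restrict (Set.Ioc a b))).measurable.sub
    (hsm.integral_prod_right' (ν := volume.restrict (Set.Ioc b a))).measurable

section Gibbs

variable {Ω : Type*} [MeasurableSpace Ω] {μ : Measure Ω} {G H : Ω → ℝ} {ε : ℝ}

/-- The real density of `μ.tilted G` with respect to `μ`. -/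
noncomputable def gibbsDensity (μ : Measure Ω) (G : Ω → ℝ) (ω : Ω) : ℝ :=
  exp (G ω) / ∫ ω', exp (G ω') ∂μ

lemma integrable_exp_of_ae_le [IsFiniteMeasure μ] (hG : AEMeasurable G μ) (C : ℝ)
    (h : ∀ᵐ ω ∂μ, G ω ≤ C) : Integrable (fun ω => exp (G ω)) μ := by
  refine Integrable.of_bound (by fun_prop) (exp C) ?_
  filter_upwards [h] with ω hω
  rw [norm_of_nonneg (exp_pos _).le]
  exact exp_le_exp.mpr hω

lemma integral_gibbsDensity [NeZero μ] (hG : Integrable (fun ω => exp (G ω)) μ) :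
    ∫ ω, gibbsDensity μ G ω ∂μ = 1 := by
  simp only [gibbsDensity]
  rw [integral_div, div_self (integral_exp_pos hG).ne']

lemma integral_exp_le_exp_mul_integral_exp (hH : Integrable (fun ω => exp (H ω)) μ)
    (h : ∀ᵐ ω ∂μ, G ω ≤ H ω + ε) :
    ∫ ω, exp (G ω) ∂μ ≤ exp ε * ∫ ω, exp (H ω) ∂μ := by
  rw [← integral_const_mul]
  refine integral_mono_of_nonneg (ae_of_all _ fun ω => (exp_pos _).le) (hH.const_mul _) ?_
  filter_upwards [h] with ω hω
  rw [← exp_add]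
  exact exp_le_exp.mpr (by linarith)

lemma gibbsDensity_le_exp_two_mul [NeZero μ] (hG : Integrable (fun ω => exp (G ω)) μ)
    (hH : Integrable (fun ω => exp (H ω)) μ) (hGH : ∀ᵐ ω ∂μ, G ω ≤ H ω + ε)
    (hHG : ∀ᵐ ω ∂μ, H ω ≤ G ω + ε) :
    ∀ᵐ ω ∂μ, gibbsDensity μ G ω ≤ exp (2 * ε) * gibbsDensity μ H ω := by
  have hZG := integral_exp_pos hG
  have hZH := integral_exp_pos hH
  have hZ := integral_exp_le_exp_mul_integral_exp hG hHG
  filter_upwards [hGH] with ω hω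
  have hexp : exp (G ω) ≤ exp ε * exp (H ω) := by
    rw [← exp_add]
    exact exp_le_exp.mpr (by linarith)
  rw [gibbsDensity, gibbsDensity, div_le_iff₀ hZG, two_mul, exp_add]
  calc exp (G ω) ≤ exp ε * exp (H ω) := hexp
    _ = exp ε * exp (H ω) / (∫ ω', exp (H ω') ∂μ) * ∫ ω', exp (H ω') ∂μ := by
        field_simp
    _ ≤ exp ε * exp (H ω) / (∫ ω', exp (H ω') ∂μ) * (exp ε * ∫ ω', exp (G ω') ∂μ) := by
        gcongr
    _ = _ := by ring

lemma integral_abs_gibbsDensity_sub_le [NeZero μ] (hG : Integrable (fun ω => exp (G ω)) μ)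
    (hH : Integrable (fun ω => exp (H ω)) μ) (hGH : ∀ᵐ ω ∂μ, |G ω - H ω| ≤ ε) :
    ∫ ω, |gibbsDensity μ G ω - gibbsDensity μ H ω| ∂μ ≤ exp (2 * ε) - 1 := by
  have hle : ∀ᵐ ω ∂μ, G ω ≤ H ω + ε := hGH.mono fun ω h => by linarith [le_abs_self (G ω - H ω)]
  have hge : ∀ᵐ ω ∂μ, H ω ≤ G ω + ε := hGH.mono fun ω h => by linarith [neg_abs_le (G ω - H ω)]
  have hε : 0 ≤ ε := by
    obtain ⟨ω, hω⟩ := hGH.exists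
    exact (abs_nonneg _).trans hω
  have hHint : Integrable (gibbsDensity μ H) μ := hH.div_const _
  calc ∫ ω, |gibbsDensity μ G ω - gibbsDensity μ H ω| ∂μ
      ≤ ∫ ω, (exp (2 * ε) - 1) * gibbsDensity μ H ω ∂μ := by
        refine integral_mono_of_nonneg (ae_of_all _ fun ω => abs_nonneg _)
          (hHint.const_mul _) ?_
        filter_upwards [gibbsDensity_le_exp_two_mul hG hH hle hge,
          gibbsDensity_le_exp_two_mul hH hG hge hle] with ω hGω hHω
        exact abs_sub_le_sub_one_mul (one_le_exp (by positivity)) hGω hHω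
    _ = exp (2 * ε) - 1 := by rw [integral_const_mul, integral_gibbsDensity hH, mul_one]

end Gibbs

end

/-- Local truncation error of the Euler-tilting scheme: freezing the
time-Lipschitz tilting rate `F` over an interval of length `δ` perturbs the
exact Gibbs update of `π` by at most `(1/2) L_ab e^{L_ab} δ²` in total
variation (written as half the `L¹(π)` distance of the two Gibbs densities
`e^G / ∫ e^G dπ` and `e^Ḡ / ∫ e^Ḡ dπ` with `G = ∫ₜ^{t+δ} F_r dr`,
`Ḡ = δ F_t`). -/
theorem euler_tilting_local_error
    {Ω : Type*} [MeasurableSpace Ω]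
    (π : Measure Ω) [IsProbabilityMeasure π]
    (F : ℝ → Ω → ℝ) (hFm : Measurable (Function.uncurry F))
    (M : ℝ) (hFb : ∀ r ω, |F r ω| ≤ M)
    (Lab : ℝ)
    (hFlip : ∀ r ∈ Set.Icc (0:ℝ) 1, ∀ t ∈ Set.Icc (0:ℝ) 1, ∀ ω,
      |F r ω - F t ω| ≤ Lab * |r - t|)
    (t δ : ℝ) (ht0 : 0 ≤ t) (hδ0 : 0 < δ) (hδ1 : δ ≤ 1) (htδ : t + δ ≤ 1) :
    (1 / 2) * ∫ ω,
        |Real.exp (∫ r in t..(t + δ), F r ω)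
            / (∫ ω', Real.exp (∫ r in t..(t + δ), F r ω') ∂π)
          - Real.exp (δ * F t ω) / (∫ ω', Real.exp (δ * F t ω') ∂π)| ∂π
      ≤ (1 / 2) * Lab * Real.exp Lab * δ ^ 2 := by
  obtain ⟨ω₀⟩ := nonempty_of_isProbabilityMeasure π
  have hLab : 0 ≤ Lab := by
    have := hFlip 1 ⟨zero_le_one, le_rfl⟩ 0 ⟨le_rfl, zero_le_one⟩ ω₀
    norm_num at this
    linarith [abs_nonneg (F 1 ω₀ - F 0 ω₀)]
  have hclose : ∀ ω, |(∫ r in t..(t + δ), F r ω) - δ * F t ω| ≤ Lab * δ ^ 2 / 2 := by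
    intro ω
    have hint : IntervalIntegrable (fun r => F r ω) volume t (t + δ) :=
      (intervalIntegrable_const (c := M)).mono_fun hFm.of_uncurry_right.aestronglyMeasurable
        (ae_of_all _ fun r => (hFb r ω).trans (le_abs_self M))
    have hlip : ∀ r ∈ Set.Ioc t (t + δ), |F r ω - F t ω| ≤ Lab * (r - t) := fun r hr => by
      simpa [abs_of_pos (sub_pos.mpr hr.1)] using
        hFlip r ⟨by linarith [hr.1], by linarith [hr.2]⟩ t ⟨ht0, by linarith⟩ ω
    simpa using abs_intervalIntegral_sub_mul_le (by linarith) hint hlip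
  have hFt : ∀ ω, δ * F t ω ≤ δ * M := fun ω =>
    mul_le_mul_of_nonneg_left ((le_abs_self _).trans (hFb t ω)) hδ0.le
  have hHint : Integrable (fun ω => Real.exp (δ * F t ω)) π :=
    integrable_exp_of_ae_le (hFm.of_uncurry_left.const_mul δ).aemeasurable _ (ae_of_all _ hFt)
  have hGint : Integrable (fun ω => Real.exp (∫ r in t..(t + δ), F r ω)) π :=
    integrable_exp_of_ae_le (measurable_intervalIntegral_of_uncurry hFm t (t + δ)).aemeasurable
      (δ * M + Lab * δ ^ 2 / 2) (ae_of_all _ fun ω => by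
        linarith [le_abs_self ((∫ r in t..(t + δ), F r ω) - δ * F t ω), hclose ω, hFt ω])
  have hTV := integral_abs_gibbsDensity_sub_le hGint hHint (ae_of_all _ hclose)
  rw [mul_div_cancel₀ _ two_ne_zero] at hTV
  have hexp := exp_mul_sq_sub_one_le hLab hδ0.le hδ1
  simp only [gibbsDensity] at hTV
  linarith
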